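/- (Conformal error bound, Theorem 2.) Let N ≥ 1 and let α ∈ (0, 1) satisfy ⌈(N+1)(1−α)⌉ ≤ N. Let Y_1, …, Y_{N+1} and Ŷ_1, …, Ŷ_{N+1} be real-valued random variables and let σ_1, …, σ_{N+1} be random variables that are almost surely strictly positive. Define the nonconformity scores S_i = (Y_i − Ŷ_i)² / σ_i for i = 1, …, N+1 and assume that S_1, …, S_{N+1} are exchangeable and almost surely pairwise distinct. Let q_α = S_{(⌈(N+1)(1−α)⌉)} be the ⌈(N+1)(1−α)⌉-th smallest of the calibration scores S_1, …, S_N (so q_α ≥ 0 almost surely). Then 1 − α ≤ ℙ(|Y_{N+1} − Ŷ_{N+1}| ≤ √(q_α · σ_{N+1})) ≤ 1 − α + 1/(N+1). -/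

import Mathlib

/-!
The coverage event `|Y - Ŷ| ≤ √(q_α σ)` is, for `σ > 0`, the event `S_{N+1} ≤ q_α`, i.e. that
fewer than `k = ⌈(N+1)(1-α)⌉` of the scores lie strictly below the test score. By
exchangeability every score has the same probability `p` of having rank `< k`; since the scores
are a.s. distinct, their ranks are a.s. a permutation of `0, …, N`, so exactly `k` scores have rank
`< k` and `(N+1) p = k`. Finally `k / (N+1) ∈ [1-α, 1-α + 1/(N+1)]`.
-/

open MeasureTheory Finset
open scoped ENNReal

/-- The `k`-th smallest value (k = 1, …, m) among `v 0, …, v (m-1)`. -/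
noncomputable def orderStat {m : ℕ} (v : Fin m → ℝ) (k : ℕ) : ℝ :=
  ((List.ofFn v).insertionSort (· ≤ ·)).getD (k - 1) 0

theorem List.Pairwise.le_getElem_iff_countP_le {α : Type*} [LinearOrder α] {l : List α}
    (hl : l.Pairwise (· ≤ ·)) {i : ℕ} (hi : i < l.length) (x : α) :
    x ≤ l[i] ↔ l.countP (· < x) ≤ i := by
  induction l generalizing i with
  | nil => simp at hi
  | cons a t ih =>
    rw [List.countP_cons]
    by_cases hax : a < x
    · cases i with
      | zero => simp [hax]
      | succ j => simp [hax, ih hl.of_cons (Nat.lt_of_succ_lt_succ hi)]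
    · have hxa : x ≤ a := not_lt.1 hax
      have ht : t.countP (· < x) = 0 := List.countP_eq_zero.2 fun y hy => by
        simpa using hxa.trans (List.rel_of_pairwise_cons hl hy)
      have hx : x ≤ (a :: t)[i] := by
        cases i with
        | zero => exact hxa
        | succ j => exact hxa.trans (List.rel_of_pairwise_cons hl (List.getElem_mem _))
      simp [hax, ht, hx]

theorem List.countP_ofFn {α : Type*} {m : ℕ} (v : Fin m → α) (p : α → Prop) [DecidablePred p] :
    (List.ofFn v).countP (fun a => decide (p a)) = #{i | p (v i)} := by
  rw [← Multiset.coe_countP, ← Fin.univ_val_map, Multiset.countP_map]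
  rfl

theorem le_orderStat_iff {m : ℕ} (v : Fin m → ℝ) {k : ℕ} (hk0 : 0 < k) (hkm : k ≤ m) (x : ℝ) :
    x ≤ orderStat v k ↔ #{i | v i < x} < k := by
  have hlen : k - 1 < ((List.ofFn v).insertionSort (· ≤ ·)).length := by simp; omega
  rw [orderStat, List.getD_eq_getElem _ _ hlen,
    (List.pairwise_insertionSort _ _).le_getElem_iff_countP_le hlen,
    (List.perm_insertionSort _ _).countP_eq, List.countP_ofFn]
  omega

theorem orderStat_nonneg {m : ℕ} {v : Fin m → ℝ} (hv : ∀ i, 0 ≤ v i) (k : ℕ) :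
    0 ≤ orderStat v k := by
  rw [orderStat, List.getD_eq_getElem?_getD]
  cases h : ((List.ofFn v).insertionSort (· ≤ ·))[k - 1]? with
  | none => simp
  | some y =>
    obtain ⟨i, rfl⟩ := List.mem_ofFn.1 <|
      (List.perm_insertionSort _ _).mem_iff.1 (List.mem_of_getElem? h)
    exact hv i

section Rank

variable {α : Type*} [LinearOrder α] {n : ℕ}

def rank (v : Fin n → α) (j : Fin n) : ℕ := #{i | v i < v j}

theorem rank_lt (v : Fin n → α) (j : Fin n) : rank v j < n :=
  (card_lt_card (filter_ssubset.2 ⟨j, mem_univ _, lt_irrefl (v j)⟩)).trans_eq (card_fin n)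

theorem rank_comp_perm (v : Fin n → α) (π : Equiv.Perm (Fin n)) (j : Fin n) :
    rank (v ∘ π) j = rank v (π j) :=
  card_equiv π (by simp)

theorem rank_lt_rank {v : Fin n → α} {i j : Fin n} (h : v i < v j) : rank v i < rank v j := by
  refine card_lt_card <| (ssubset_iff_of_subset fun k hk => ?_).2 ⟨i, by simpa using h, by simp⟩
  simp only [mem_filter, mem_univ, true_and] at hk ⊢
  exact hk.trans h

theorem rank_injective {v : Fin n → α} (hv : Function.Injective v) :
    Function.Injective (rank v) := by
  intro i j h
  by_contra hij
  rcases (hv.ne hij).lt_or_gt with hlt | hlt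
  · exact (rank_lt_rank hlt).ne h
  · exact (rank_lt_rank hlt).ne' h

theorem card_rank_lt {v : Fin n → α} (hv : Function.Injective v) {k : ℕ} (hk : k ≤ n) :
    #{j | rank v j < k} = k := by
  have hinj := rank_injective hv
  have himage : univ.image (rank v) = range n :=
    eq_of_subset_of_card_le (by simp [subset_iff, rank_lt])
      (by rw [card_image_of_injective _ hinj]; simp)
  have hrange : {r ∈ range n | r < k} = range k := by
    ext r
    simp only [mem_filter, mem_range]
    omega
  calc #{j | rank v j < k} = #{r ∈ univ.image (rank v) | r < k} := by
        rw [filter_image, card_image_of_injective _ hinj]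
    _ = k := by rw [himage, hrange, card_range]

theorem rank_last {N : ℕ} (v : Fin (N + 1) → α) :
    rank v (Fin.last N) = #{i : Fin N | v i.castSucc < v (Fin.last N)} := by
  rw [rank, card_filter, card_filter, Fin.sum_univ_castSucc]
  simp

end Rank

theorem measurable_rank {n : ℕ} (j : Fin n) : Measurable fun v : Fin n → ℝ => rank v j := by
  simp only [rank, card_filter]
  exact Finset.measurable_sum _ fun i _ =>
    Measurable.ite (measurableSet_lt (measurable_pi_apply i) (measurable_pi_apply j))
      measurable_const measurable_const

section Exchangeable

variable {Ω : Type*} [MeasurableSpace Ω] {P : Measure Ω} {n : ℕ} {T : Ω → Fin n → ℝ}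

theorem ae_injective_of_measure_eq_zero {ι β : Type*} [Countable ι] {X : ι → Ω → β}
    (h : ∀ i j, i ≠ j → P {ω | X i ω = X j ω} = 0) :
    ∀ᵐ ω ∂P, Function.Injective fun i => X i ω := by
  have hne : ∀ᵐ ω ∂P, ∀ i j, i ≠ j → X i ω ≠ X j ω := by
    refine ae_all_iff.2 fun i => ae_all_iff.2 fun j => ?_
    by_cases hij : i = j
    · simp [hij]
    · exact (measure_eq_zero_iff_ae_notMem.1 (h i j hij)).mono fun ω hω _ => hω
  filter_upwards [hne] with ω hω i j hij
  by_contra h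
  exact hω i j h hij

theorem measure_rank_lt_eq_of_exchangeable (hT : Measurable T)
    (hexch : ∀ π : Equiv.Perm (Fin n), P.map (fun ω => T ω ∘ π) = P.map T) (i j : Fin n) (k : ℕ) :
    P {ω | rank (T ω) i < k} = P {ω | rank (T ω) j < k} := by
  set π := Equiv.swap j i
  have hA : MeasurableSet {v : Fin n → ℝ | rank v j < k} := measurable_rank j measurableSet_Iio
  have hπ : Measurable fun ω => T ω ∘ π :=
    (measurable_pi_lambda _ fun l => measurable_pi_apply (π l)).comp hT
  calc P {ω | rank (T ω) i < k} = P ((fun ω => T ω ∘ π) ⁻¹' {v | rank v j < k}) := by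
        simp [π, rank_comp_perm]
    _ = P {ω | rank (T ω) j < k} := by
        rw [← Measure.map_apply hπ hA, hexch, Measure.map_apply hT hA]
        rfl

theorem sum_measure_rank_lt [IsProbabilityMeasure P] (hT : Measurable T)
    (hinj : ∀ᵐ ω ∂P, Function.Injective (T ω)) {k : ℕ} (hk : k ≤ n) :
    ∑ j, P {ω | rank (T ω) j < k} = k := by
  have hE : ∀ j, MeasurableSet {ω | rank (T ω) j < k} := fun j =>
    (measurable_rank j).comp hT measurableSet_Iio
  calc ∑ j, P {ω | rank (T ω) j < k}
      = ∫⁻ ω, ∑ j, {ω | rank (T ω) j < k}.indicator 1 ω ∂P := by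
        rw [lintegral_finsetSum _ fun j _ => measurable_one.indicator (hE j)]
        simp [lintegral_indicator_one (hE _)]
    _ = ∫⁻ _, (k : ℝ≥0∞) ∂P := by
        refine lintegral_congr_ae (hinj.mono fun ω hω => ?_)
        simp [Set.indicator_apply, card_rank_lt hω hk]
    _ = k := by simp

theorem measure_rank_lt_of_exchangeable [IsProbabilityMeasure P] (hT : Measurable T)
    (hexch : ∀ π : Equiv.Perm (Fin n), P.map (fun ω => T ω ∘ π) = P.map T)
    (hinj : ∀ᵐ ω ∂P, Function.Injective (T ω)) (j : Fin n) {k : ℕ} (hk : k ≤ n) :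
    P {ω | rank (T ω) j < k} = k / n := by
  have hsum := sum_measure_rank_lt hT hinj hk
  simp only [measure_rank_lt_eq_of_exchangeable hT hexch _ j k, sum_const, card_univ,
    Fintype.card_fin, nsmul_eq_mul] at hsum
  exact (ENNReal.eq_div_iff (by simp [j.pos.ne']) (by simp)).2 hsum

end Exchangeable

theorem abs_le_sqrt_mul_iff {d q s : ℝ} (hq : 0 ≤ q) (hs : 0 < s) :
    |d| ≤ √(q * s) ↔ d ^ 2 / s ≤ q := by
  rw [Real.le_sqrt (abs_nonneg d) (mul_nonneg hq hs.le), sq_abs, div_le_iff₀ hs]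

theorem le_orderStat_castSucc_iff_rank_lt {N : ℕ} (v : Fin (N + 1) → ℝ) {k : ℕ} (hk0 : 0 < k)
    (hkN : k ≤ N) :
    v (Fin.last N) ≤ orderStat (fun i : Fin N => v i.castSucc) k ↔ rank v (Fin.last N) < k := by
  rw [le_orderStat_iff _ hk0 hkN, rank_last]

theorem Nat.ceil_mul_div_mem_Icc {c β : ℝ} (hc : 0 < c) (hβ : 0 ≤ β) :
    (⌈c * β⌉₊ : ℝ) / c ∈ Set.Icc β (β + 1 / c) := by
  have hle := Nat.le_ceil (c * β)
  have hlt := Nat.ceil_lt_add_one (mul_nonneg hc.le hβ)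
  constructor
  · rw [le_div_iff₀ hc]
    linarith
  · rw [div_le_iff₀ hc, add_mul, one_div_mul_cancel hc.ne']
    linarith

theorem conformal_error_bound_general
    {Ω : Type*} [MeasurableSpace Ω] (P : Measure Ω) [IsProbabilityMeasure P]
    (N : ℕ) (α : ℝ) (hα1 : α < 1)
    (hk : ⌈((N : ℝ) + 1) * (1 - α)⌉ ≤ (N : ℤ))
    (Y Yhat σ : Fin (N + 1) → Ω → ℝ)
    (hmeasY : ∀ i, Measurable (Y i)) (hmeasYhat : ∀ i, Measurable (Yhat i))
    (hmeasσ : ∀ i, Measurable (σ i))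
    (hσpos : ∀ i, ∀ᵐ ω ∂P, 0 < σ i ω)
    (S : Fin (N + 1) → Ω → ℝ)
    (hS : ∀ i ω, S i ω = (Y i ω - Yhat i ω) ^ 2 / σ i ω)
    (hexch : ∀ π : Equiv.Perm (Fin (N + 1)),
      Measure.map (fun ω => fun i => S (π i) ω) P
        = Measure.map (fun ω => fun i => S i ω) P)
    (hdist : ∀ i j, i ≠ j → P {ω | S i ω = S j ω} = 0) :
    1 - α ≤ (P {ω | |Y (Fin.last N) ω - Yhat (Fin.last N) ω| ≤
        Real.sqrt (orderStat (fun i : Fin N => S i.castSucc ω)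
            (⌈((N : ℝ) + 1) * (1 - α)⌉).toNat * σ (Fin.last N) ω)}).toReal ∧
      (P {ω | |Y (Fin.last N) ω - Yhat (Fin.last N) ω| ≤
        Real.sqrt (orderStat (fun i : Fin N => S i.castSucc ω)
            (⌈((N : ℝ) + 1) * (1 - α)⌉).toNat * σ (Fin.last N) ω)}).toReal
        ≤ 1 - α + 1 / ((N : ℝ) + 1) := by
  simp only [Int.ceil_toNat]
  set k := ⌈((N : ℝ) + 1) * (1 - α)⌉₊
  have hk0 : 0 < k := Nat.ceil_pos.2 (mul_pos (by positivity) (by linarith))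
  have hkN : k ≤ N := Nat.ceil_le.2 (by exact_mod_cast Int.ceil_le.1 hk)
  have hSmeas : Measurable fun ω i => S i ω := measurable_pi_lambda _ fun i => by
    simp only [hS]
    exact (((hmeasY i).sub (hmeasYhat i)).pow_const 2).div (hmeasσ i)
  have hevent : {ω | |Y (Fin.last N) ω - Yhat (Fin.last N) ω| ≤
      √(orderStat (fun i : Fin N => S i.castSucc ω) k * σ (Fin.last N) ω)}
      =ᵐ[P] {ω | rank (fun i => S i ω) (Fin.last N) < k} := by
    refine Filter.eventuallyEq_set.2 ?_
    filter_upwards [ae_all_iff.2 hσpos] with ω hσ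
    have hS0 : ∀ i, 0 ≤ S i ω := fun i => by
      rw [hS]
      exact div_nonneg (sq_nonneg _) (hσ i).le
    have hq := orderStat_nonneg (fun i : Fin N => hS0 i.castSucc) k
    rw [abs_le_sqrt_mul_iff hq (hσ _), ← hS]
    exact le_orderStat_castSucc_iff_rank_lt (fun i => S i ω) hk0 hkN
  have hprob := measure_rank_lt_of_exchangeable hSmeas hexch
    (ae_injective_of_measure_eq_zero hdist) (Fin.last N) (Nat.le_succ_of_le hkN)
  rw [measure_congr hevent, hprob, ENNReal.toReal_div, ENNReal.toReal_natCast,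
    ENNReal.toReal_natCast, Nat.cast_succ]
  exact Nat.ceil_mul_div_mem_Icc (by positivity) (by linarith)

/-- Conformal error bound, Theorem 2: Let `Y i` be the true values,
`Yhat i` the predicted means, and `σ i` a.s. strictly positive predicted scales,
for `i = 0, …, N` (index `Fin.last N` being the test point). Define the nonconformity
scores `S i = (Y i - Yhat i)² / σ i` and assume they are exchangeable and a.s.
pairwise distinct. With `α ∈ (0,1)` such that `⌈(N+1)(1-α)⌉ ≤ N`, letting
`q_α = S_(⌈(N+1)(1-α)⌉)` be the corresponding order statistic of the `N` calibration
scores, we have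
`1 - α ≤ ℙ(|Y_{N+1} - Yhat_{N+1}| ≤ √(q_α · σ_{N+1})) ≤ 1 - α + 1 / (N + 1)`. -/
theorem conformal_error_bound
    {Ω : Type*} [MeasurableSpace Ω] (P : Measure Ω) [IsProbabilityMeasure P]
    (N : ℕ) (hN : 1 ≤ N) (α : ℝ) (hα0 : 0 < α) (hα1 : α < 1)
    (hk : ⌈((N : ℝ) + 1) * (1 - α)⌉ ≤ (N : ℤ))
    (Y Yhat σ : Fin (N + 1) → Ω → ℝ)
    (hmeasY : ∀ i, Measurable (Y i)) (hmeasYhat : ∀ i, Measurable (Yhat i))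
    (hmeasσ : ∀ i, Measurable (σ i))
    (hσpos : ∀ i, ∀ᵐ ω ∂P, 0 < σ i ω)
    (S : Fin (N + 1) → Ω → ℝ)
    (hS : ∀ i ω, S i ω = (Y i ω - Yhat i ω) ^ 2 / σ i ω)
    (hexch : ∀ π : Equiv.Perm (Fin (N + 1)),
      Measure.map (fun ω => fun i => S (π i) ω) P
        = Measure.map (fun ω => fun i => S i ω) P)
    (hdist : ∀ i j, i ≠ j → P {ω | S i ω = S j ω} = 0) :
    1 - α ≤ (P {ω | |Y (Fin.last N) ω - Yhat (Fin.last N) ω| ≤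
        Real.sqrt (orderStat (fun i : Fin N => S i.castSucc ω)
            (⌈((N : ℝ) + 1) * (1 - α)⌉).toNat * σ (Fin.last N) ω)}).toReal ∧
      (P {ω | |Y (Fin.last N) ω - Yhat (Fin.last N) ω| ≤
        Real.sqrt (orderStat (fun i : Fin N => S i.castSucc ω)
            (⌈((N : ℝ) + 1) * (1 - α)⌉).toNat * σ (Fin.last N) ω)}).toReal
        ≤ 1 - α + 1 / ((N : ℝ) + 1) :=
  conformal_error_bound_general P N α hα1 hk Y Yhat σ hmeasY hmeasYhat hmeasσ hσpos S hS hexch hdist
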